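/- arXiv:1008.0588 — 3 statements merged into one kernel-verified Lean document; each statement's English description precedes it below -/
import Mathlib

section
/- The point K = (8t²/(1+4t²), 4t/(1+4t²)) lies on the circle x² + y² - 2x = 0 and on the line (a - 2t)x - (1 + 2at)y + 4t = 0 for every real a. Hence the lines AA₀, BB₀, CC₀ (obtained by substituting parameters a, b, c) all pass through K. -/
/-- The point `K = (8t²/(1+4t²), 4t/(1+4t²))` lies on the circle
`x² + y² - 2x = 0`, and satisfies the line equation
`(u - 2t)x - (1 + 2ut)y + 4t = 0` for every real parameter `u`; hence the
lines `AA₀`, `BB₀`, `CC₀` (for parameters `a`, `b`, `c`) all pass through `K`. -/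
theorem lines_concur_at_K (t : ℝ) :
    ((8 * t ^ 2 / (1 + 4 * t ^ 2)) ^ 2 + (4 * t / (1 + 4 * t ^ 2)) ^ 2
        - 2 * (8 * t ^ 2 / (1 + 4 * t ^ 2)) = 0) ∧
    (∀ u : ℝ, (u - 2 * t) * (8 * t ^ 2 / (1 + 4 * t ^ 2))
        - (1 + 2 * u * t) * (4 * t / (1 + 4 * t ^ 2)) + 4 * t = 0) := by
  have hden : 1 + 4 * t ^ 2 ≠ 0 := by positivity
  refine ⟨?_, fun u => ?_⟩ <;> field_simp <;> ring
end

section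
/- Triangle A₀B₀C₀, the image of triangle ABC under a direct similarity centered at a point J on the circumcircle of ABC, is in perspective with ABC: the lines AA₀, BB₀, CC₀ are concurrent. -/
/-!
Write `u = α - 1`, so that `σ(X) - X = u (X - J)`: every line `X σ(X)` with `X ∈ Σ` makes the
fixed angle `arg u` with the chord `XJ`. By the inscribed angle theorem it therefore meets `Σ`
a second time at one and the same point `K = O + (J - O) u / ū`, which lies on all three lines.
In coordinates centred at `O` this is the statement that `(K - X) / (σ(X) - X)` is fixed by
conjugation, which follows from `X X̄ = J J̄`.
-/

open ComplexConjugate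

namespace Complex

theorem mem_affineSpan_pair_of_conj_div_eq {X Y K : ℂ} (hXY : X ≠ Y)
    (h : conj ((K - X) / (Y - X)) = (K - X) / (Y - X)) : K ∈ line[ℝ, X, Y] := by
  obtain ⟨t, ht⟩ := conj_eq_iff_real.mp h
  have hK : K = t • (Y -ᵥ X) +ᵥ X := by
    rw [vsub_eq_sub, vadd_eq_add, real_smul, ← ht, div_mul_cancel₀ _ (sub_ne_zero.mpr hXY.symm)]
    ring
  exact hK ▸ smul_vsub_vadd_mem_affineSpan_pair t X Y

theorem mul_conj_sub_eq_of_dist_eq {X J O : ℂ} (h : dist X O = dist J O) :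
    (X - O) * conj (X - O) = (J - O) * conj (J - O) := by
  rw [mul_conj', mul_conj', ← dist_eq, ← dist_eq, h]

theorem conj_div_eq_self_of_mul_conj_eq {a b u : ℂ} (hab : a * conj a = b * conj b)
    (hu : u ≠ 0) (hne : a ≠ b) :
    conj ((b * (u / conj u) - a) / (u * (a - b))) = (b * (u / conj u) - a) / (u * (a - b)) := by
  have hu' : conj u ≠ 0 := (map_ne_zero _).mpr hu
  have hab' : a - b ≠ 0 := sub_ne_zero.mpr hne
  have hab'' : conj a - conj b ≠ 0 := by rw [← map_sub]; exact (map_ne_zero _).mpr hab'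
  simp only [map_div₀, map_mul, map_sub, conj_conj]
  rw [div_eq_div_iff (mul_ne_zero hu' hab'') (mul_ne_zero hu hab')]
  field_simp
  linear_combination (conj u - u) * hab

end Complex

open Complex

noncomputable def perspector (O J α : ℂ) : ℂ := O + (J - O) * ((α - 1) / conj (α - 1))

theorem perspector_mem_affineSpan {O J X α : ℂ} (hX : dist X O = dist J O)
    (hne : X ≠ J + α * (X - J)) : perspector O J α ∈ line[ℝ, X, J + α * (X - J)] := by
  have hα : α - 1 ≠ 0 := by
    rintro h
    exact hne (by rw [sub_eq_zero.mp h]; ring)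
  have hXJ : X - O ≠ J - O := by
    rintro h
    exact hne (by rw [sub_left_inj.mp h]; ring)
  have hratio := conj_div_eq_self_of_mul_conj_eq (mul_conj_sub_eq_of_dist_eq hX) hα hXJ
  have hK : perspector O J α - X = (J - O) * ((α - 1) / conj (α - 1)) - (X - O) := by
    rw [perspector]; ring
  have hY : J + α * (X - J) - X = (α - 1) * (X - O - (J - O)) := by ring
  refine mem_affineSpan_pair_of_conj_div_eq hne ?_
  rwa [hK, hY]

theorem perspective_of_direct_similarity_general (A B C J : ℂ) (O : ℂ) (r : ℝ)
    (hA : dist A O = r) (hB : dist B O = r) (hC : dist C O = r)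
    (hJ : dist J O = r) (α : ℂ)
    (A₀ B₀ C₀ : ℂ) (hA₀ : A₀ = J + α * (A - J)) (hB₀ : B₀ = J + α * (B - J))
    (hC₀ : C₀ = J + α * (C - J))
    (hAA : A ≠ A₀) (hBB : B ≠ B₀) (hCC : C ≠ C₀) :
    ∃ K : ℂ, K ∈ affineSpan ℝ ({A, A₀} : Set ℂ) ∧
      K ∈ affineSpan ℝ ({B, B₀} : Set ℂ) ∧
      K ∈ affineSpan ℝ ({C, C₀} : Set ℂ) := by
  subst hA₀ hB₀ hC₀
  exact ⟨perspector O J α, perspector_mem_affineSpan (hA.trans hJ.symm) hAA,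
    perspector_mem_affineSpan (hB.trans hJ.symm) hBB,
    perspector_mem_affineSpan (hC.trans hJ.symm) hCC⟩

/-- If `J` lies on the circumcircle of a nondegenerate triangle `ABC` (in the
plane, identified with `ℂ`) and `σ : z ↦ J + α(z - J)` (`α ≠ 0`, `α ≠ 1`) is a
nontrivial direct similarity centered at `J`, then triangle `A₀B₀C₀ = σ(ABC)`
is in perspective with `ABC`: the lines `AA₀`, `BB₀`, `CC₀` are concurrent. -/
theorem perspective_of_direct_similarity (A B C J : ℂ) (O : ℂ) (r : ℝ)
    (hABC : ¬ Collinear ℝ ({A, B, C} : Set ℂ))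
    (hA : dist A O = r) (hB : dist B O = r) (hC : dist C O = r)
    (hJ : dist J O = r) (α : ℂ) (hα0 : α ≠ 0) (hα1 : α ≠ 1)
    (A₀ B₀ C₀ : ℂ) (hA₀ : A₀ = J + α * (A - J)) (hB₀ : B₀ = J + α * (B - J))
    (hC₀ : C₀ = J + α * (C - J))
    (hAA : A ≠ A₀) (hBB : B ≠ B₀) (hCC : C ≠ C₀)
    (hl₁ : affineSpan ℝ ({A, A₀} : Set ℂ) ≠ affineSpan ℝ ({B, B₀} : Set ℂ))
    (hl₂ : affineSpan ℝ ({B, B₀} : Set ℂ) ≠ affineSpan ℝ ({C, C₀} : Set ℂ))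
    (hl₃ : affineSpan ℝ ({A, A₀} : Set ℂ) ≠ affineSpan ℝ ({C, C₀} : Set ℂ)) :
    ∃ K : ℂ, K ∈ affineSpan ℝ ({A, A₀} : Set ℂ) ∧
      K ∈ affineSpan ℝ ({B, B₀} : Set ℂ) ∧
      K ∈ affineSpan ℝ ({C, C₀} : Set ℂ) :=
  perspective_of_direct_similarity_general A B C J O r hA hB hC hJ α A₀ B₀ C₀ hA₀ hB₀ hC₀ hAA hBB
    hCC
end

section
/- The circumcircle Σ₀ of triangle A₀B₀C₀ (the image of ABC under the direct similarity σ centered at J) meets the circumcircle Σ of ABC at J and at the perspector K of the two triangles. -/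
/-!
Write `σ z = J + α (z - J)` and `β = α - 1`. For `P` on the circle `Σ` (centre `O`, through `J`)
the line `P σ(P)` has direction `β (P - J)`, so it makes the fixed angle `arg β` with `PJ`; by the
inscribed angle theorem every such line passes through one point `K*` of `Σ`. If `K ≠ K*` lay on
the three lines, then each of `A - J`, `B - J`, `C - J` would be a real multiple of
`(K - K*) conj β`, making `A, B, C` collinear. Hence `K = K*`, and the distances from `K*` to `O`
and to `σ(O)` are a direct computation.
-/

open Complex ComplexConjugate

theorem im_mul_conj_sub_eq_zero_of_mem_affineSpan_pair {p q x : ℂ}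
    (hx : x ∈ line[ℝ, p, q]) : ((x - p) * conj (q - p)).im = 0 := by
  obtain ⟨s, rfl⟩ := mem_affineSpan_pair_iff_exists_lineMap_eq.mp hx
  rw [AffineMap.lineMap_apply_module', real_smul, add_sub_cancel_right, mul_assoc, mul_conj,
    ← ofReal_mul, ofReal_im]

theorem collinear_of_forall_im_mul_conj_sub_eq_zero {s : Set ℂ} {c w : ℂ} (hw : w ≠ 0)
    (h : ∀ p ∈ s, (w * conj (p - c)).im = 0) : Collinear ℝ s := by
  rw [collinear_iff_exists_forall_eq_smul_vadd]
  refine ⟨c, w, fun p hp => ⟨(conj w * (p - c)).re / normSq w, ?_⟩⟩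
  have hreal : ((conj w * (p - c)).re : ℂ) = conj w * (p - c) := by
    have := conj_eq_iff_im.mpr (h p hp)
    rw [← conj_eq_iff_re]
    simpa [mul_comm] using this.symm
  have hw' : conj w ≠ 0 := (map_ne_zero _).mpr hw
  rw [real_smul, vadd_eq_add, ofReal_div, hreal, normSq_eq_conj_mul_self]
  field_simp
  ring

/-- The point `K*`: `J` turned about `O` through `2 arg (α - 1)`. -/
noncomputable def spiralPerspector (J O α : ℂ) : ℂ :=
  O + (α - 1) / conj (α - 1) * (J - O)

theorem im_spiralPerspector_sub_mul_conj_eq_zero {J O P : ℂ} (α : ℂ)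
    (hP : dist P O = dist J O) :
    ((spiralPerspector J O α - P) * conj (J + α * (P - J) - P)).im = 0 := by
  have hcancel : (α - 1) / conj (α - 1) * conj (α - 1) = α - 1 :=
    div_mul_cancel_of_imp (map_eq_zero _).mp
  have hsq : (P.re - O.re) ^ 2 + (P.im - O.im) ^ 2 = (J.re - O.re) ^ 2 + (J.im - O.im) ^ 2 := by
    rw [dist_eq, dist_eq, ← sq_eq_sq₀ (norm_nonneg _) (norm_nonneg _), Complex.sq_norm,
      Complex.sq_norm] at hP
    simpa [normSq_apply, sq] using hP
  have hexpand : (spiralPerspector J O α - P) * conj (J + α * (P - J) - P)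
      = ((O - P) * conj (α - 1) + (α - 1) * (J - O)) * conj (P - J) := by
    have : J + α * (P - J) - P = (α - 1) * (P - J) := by ring
    rw [this, map_mul, spiralPerspector]
    linear_combination (J - O) * conj (P - J) * hcancel
  rw [hexpand]
  simp only [mul_im, mul_re, add_im, add_re, sub_im, sub_re, conj_re, conj_im, one_re, one_im]
  linear_combination α.im * hsq

theorem im_sub_spiralPerspector_mul_conj_eq_zero {J O P K : ℂ} (α : ℂ)
    (hP : dist P O = dist J O) (hK : K ∈ line[ℝ, P, J + α * (P - J)]) :
    ((K - spiralPerspector J O α) * conj (α - 1) * conj (P - J)).im = 0 := by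
  have hsplit : (K - spiralPerspector J O α) * conj (α - 1) * conj (P - J)
      = (K - P) * conj (J + α * (P - J) - P)
        - (spiralPerspector J O α - P) * conj (J + α * (P - J) - P) := by
    simp only [map_sub, map_add, map_mul, map_one]
    ring
  rw [hsplit, sub_im, im_mul_conj_sub_eq_zero_of_mem_affineSpan_pair hK,
    im_spiralPerspector_sub_mul_conj_eq_zero α hP, sub_zero]

theorem eq_spiralPerspector_of_not_collinear {J O K α : ℂ} {s : Set ℂ} (hα : α ≠ 1)
    (hs : ¬ Collinear ℝ s)
    (hK : ∀ P ∈ s, dist P O = dist J O ∧ K ∈ line[ℝ, P, J + α * (P - J)]) :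
    K = spiralPerspector J O α := by
  by_contra hne
  refine hs (collinear_of_forall_im_mul_conj_sub_eq_zero (c := J)
    (w := (K - spiralPerspector J O α) * conj (α - 1)) ?_ fun P hP => ?_)
  · exact mul_ne_zero (sub_ne_zero.mpr hne) ((map_ne_zero _).mpr (sub_ne_zero.mpr hα))
  · exact im_sub_spiralPerspector_mul_conj_eq_zero α (hK P hP).1 (hK P hP).2

theorem dist_spiralPerspector_center {α : ℂ} (J O : ℂ) (hα : α ≠ 1) :
    dist (spiralPerspector J O α) O = dist J O := by
  rw [spiralPerspector, dist_self_add_left, norm_mul, norm_div, norm_conj, div_self, one_mul,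
    dist_eq_norm]
  exact norm_ne_zero_iff.mpr (sub_ne_zero.mpr hα)

theorem dist_spiralPerspector_image_center {α : ℂ} (J O : ℂ) (hα : α ≠ 1) :
    dist (spiralPerspector J O α) (J + α * (O - J)) = ‖α‖ * dist J O := by
  have hβ : conj (α - 1) ≠ 0 := (map_ne_zero _).mpr (sub_ne_zero.mpr hα)
  have h : spiralPerspector J O α - (J + α * (O - J))
      = (α - 1) / conj (α - 1) * conj α * (J - O) := by
    rw [spiralPerspector]
    field_simp
    simp only [map_sub, map_one]
    ring
  rw [dist_eq_norm, h, norm_mul, norm_mul, norm_div, norm_conj, norm_conj, div_self, one_mul,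
    dist_eq_norm]
  exact norm_ne_zero_iff.mpr (sub_ne_zero.mpr hα)

theorem circumcircles_meet_at_J_and_K_general (A B C J : ℂ) (O : ℂ) (r : ℝ)
    (hABC : ¬ Collinear ℝ ({A, B, C} : Set ℂ))
    (hA : dist A O = r) (hB : dist B O = r) (hC : dist C O = r)
    (hJ : dist J O = r) (α : ℂ) (hα1 : α ≠ 1)
    (A₀ B₀ C₀ : ℂ) (hA₀ : A₀ = J + α * (A - J)) (hB₀ : B₀ = J + α * (B - J))
    (hC₀ : C₀ = J + α * (C - J)) (O₀ : ℂ) (hO₀ : O₀ = J + α * (O - J))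
    (K : ℂ) (hK₁ : K ∈ affineSpan ℝ ({A, A₀} : Set ℂ))
    (hK₂ : K ∈ affineSpan ℝ ({B, B₀} : Set ℂ))
    (hK₃ : K ∈ affineSpan ℝ ({C, C₀} : Set ℂ)) :
    dist J O₀ = ‖α‖ * r ∧ dist K O = r ∧
      dist K O₀ = ‖α‖ * r := by
  subst hA₀ hB₀ hC₀ hO₀
  obtain rfl : K = spiralPerspector J O α := by
    refine eq_spiralPerspector_of_not_collinear hα1 hABC ?_
    simp only [Set.mem_insert_iff, Set.mem_singleton_iff, forall_eq_or_imp, forall_eq]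
    exact ⟨⟨hA.trans hJ.symm, hK₁⟩, ⟨hB.trans hJ.symm, hK₂⟩, hC.trans hJ.symm, hK₃⟩
  refine ⟨?_, ?_, ?_⟩
  · rw [dist_self_add_right, norm_mul, ← dist_eq_norm', hJ]
  · rw [dist_spiralPerspector_center J O hα1, hJ]
  · rw [dist_spiralPerspector_image_center J O hα1, hJ]

/-- The circumcircle `Σ₀` of `A₀B₀C₀` (the image of triangle `ABC` under a
direct similarity `σ : z ↦ J + α(z - J)`, `α ≠ 0`, `α ≠ 1`, centered at a point
`J` of the circumcircle `Σ` of `ABC`) meets `Σ` at `J` and at the perspector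
`K` of the two triangles: `Σ₀` has center `σ(O)` and radius `|α| r`, and both
`J` and `K` lie on `Σ` and on `Σ₀`. -/
theorem circumcircles_meet_at_J_and_K (A B C J : ℂ) (O : ℂ) (r : ℝ)
    (hABC : ¬ Collinear ℝ ({A, B, C} : Set ℂ))
    (hA : dist A O = r) (hB : dist B O = r) (hC : dist C O = r)
    (hJ : dist J O = r) (α : ℂ) (hα0 : α ≠ 0) (hα1 : α ≠ 1)
    (A₀ B₀ C₀ : ℂ) (hA₀ : A₀ = J + α * (A - J)) (hB₀ : B₀ = J + α * (B - J))
    (hC₀ : C₀ = J + α * (C - J)) (O₀ : ℂ) (hO₀ : O₀ = J + α * (O - J))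
    (K : ℂ) (hK₁ : K ∈ affineSpan ℝ ({A, A₀} : Set ℂ))
    (hK₂ : K ∈ affineSpan ℝ ({B, B₀} : Set ℂ))
    (hK₃ : K ∈ affineSpan ℝ ({C, C₀} : Set ℂ))
    (hKJ : K ≠ J) :
    dist J O₀ = ‖α‖ * r ∧ dist K O = r ∧
      dist K O₀ = ‖α‖ * r :=
  circumcircles_meet_at_J_and_K_general A B C J O r hABC hA hB hC hJ α hα1 A₀ B₀ C₀ hA₀ hB₀ hC₀ O₀
    hO₀ K hK₁ hK₂ hK₃
end
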